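/- arXiv:1411.6586 — 2 statements merged into one kernel-verified Lean document; each statement's English description precedes it below -/
import Mathlib

section
/- Let p > 1, and let f : (0,∞) → (0,∞) be continuously differentiable, strictly increasing and concave, such that the function x ↦ f(x)^{p−1} · f'(x) is decreasing. Then for all distinct x, y ∈ (0,∞), J_p(f(x), f(y)) ≤ f(A(x, y)), where A(x,y) = (x+y)/2 is the arithmetic mean. -/
/-!
With the weight `w = f ^ (p - 1) * f'`, the fundamental theorem of calculus gives
`p ∫ w = f(y)^p - f(x)^p` and `(p + 1) ∫ f w = f(y)^(p+1) - f(x)^(p+1)` over `[x, y]`, so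
`J_p(f x, f y)` is the mean of `f` against `w`. For the midpoint `m`, `f` increasing and `w`
decreasing give `(f m - f) (w - w m) ≥ 0`, hence `∫ f w ≤ f m ∫ w - w m ((y - x) f m - ∫ f)`;
the last bracket is nonnegative by the Hermite–Hadamard inequality for the concave `f`.
-/

open Set

/-- The Alzer mean `J_p(a,b) = (p/(p+1)) * (a^(p+1) - b^(p+1))/(a^p - b^p)`
of distinct positive reals `a`, `b`, for `p ∉ {0, -1}`. -/
noncomputable def alzer (p a b : ℝ) : ℝ :=
  (p / (p + 1)) * ((a ^ (p + 1) - b ^ (p + 1)) / (a ^ p - b ^ p))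

open intervalIntegral
open MeasureTheory (volume)

theorem alzer_comm (p a b : ℝ) : alzer p a b = alzer p b a := by
  rw [alzer, alzer, ← neg_sub (b ^ (p + 1)), ← neg_sub (b ^ p), neg_div_neg_eq]

theorem HasDerivAt.nonneg_of_monotoneOn {g : ℝ → ℝ} {g' x : ℝ} {s : Set ℝ}
    (hd : HasDerivAt g g' x) (hg : MonotoneOn g s) (hs : s ∈ nhds x) : 0 ≤ g' := by
  have hacc : AccPt x (Filter.principal s) := by
    simpa using (PerfectSpace.univ_preperfect x (mem_univ x)).nhds_inter hs
  exact hd.hasDerivWithinAt.nonneg_of_monotoneOn hacc hg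

theorem ConcaveOn.integral_le_mul_apply_midpoint {f : ℝ → ℝ} {a b : ℝ} (hab : a ≤ b)
    (hf : ConcaveOn ℝ (Icc a b) f) (hint : IntervalIntegrable f volume a b) :
    ∫ u in a..b, f u ≤ (b - a) * f ((a + b) / 2) := by
  have hrefl : ∫ u in a..b, f (a + b - u) = ∫ u in a..b, f u := by
    simp [integral_comp_sub_left]
  have hint_refl : IntervalIntegrable (fun u => f (a + b - u)) volume a b := by
    simpa using (hint.comp_sub_left (a + b)).symm
  have hpair : ∀ u ∈ Icc a b, f u + f (a + b - u) ≤ 2 * f ((a + b) / 2) := by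
    intro u hu
    have hu' : a + b - u ∈ Icc a b := ⟨by linarith [hu.2], by linarith [hu.1]⟩
    have h := hf.2 hu hu' (by norm_num : (0 : ℝ) ≤ 1 / 2) (by norm_num : (0 : ℝ) ≤ 1 / 2)
      (by norm_num)
    simp only [smul_eq_mul] at h
    rw [show 1 / 2 * u + 1 / 2 * (a + b - u) = (a + b) / 2 by ring] at h
    linarith
  have h := integral_mono_on hab (hint.add hint_refl) intervalIntegrable_const hpair
  rw [integral_add hint hint_refl, hrefl, integral_const, smul_eq_mul] at h
  linarith

theorem integral_mul_le_of_monotoneOn_of_antitoneOn {g w : ℝ → ℝ} {a b c : ℝ} (hab : a ≤ b)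
    (hc : c ∈ Icc a b) (hg : MonotoneOn g (Icc a b)) (hw : AntitoneOn w (Icc a b))
    (hgc : ContinuousOn g (Icc a b)) (hwc : ContinuousOn w (Icc a b)) (hw₀ : 0 ≤ w c)
    (hmean : ∫ u in a..b, g u ≤ (b - a) * g c) :
    ∫ u in a..b, g u * w u ≤ g c * ∫ u in a..b, w u := by
  rw [← uIcc_of_le hab] at hgc hwc
  have hint_g : IntervalIntegrable g volume a b := hgc.intervalIntegrable
  have hint_w : IntervalIntegrable w volume a b := hwc.intervalIntegrable
  have hint_gw : IntervalIntegrable (fun u => g u * w u) volume a b :=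
    (hgc.mul hwc).intervalIntegrable
  have hpt : ∀ u ∈ Icc a b, 0 ≤ (g c - g u) * (w u - w c) := by
    intro u hu
    rcases le_total u c with huc | hcu
    · exact mul_nonneg (sub_nonneg.2 (hg hu hc huc)) (sub_nonneg.2 (hw hu hc huc))
    · exact mul_nonneg_of_nonpos_of_nonpos (sub_nonpos.2 (hg hc hu hcu))
        (sub_nonpos.2 (hw hc hu hcu))
  have hexpand : ∫ u in a..b, (g c - g u) * (w u - w c)
      = g c * (∫ u in a..b, w u) - (∫ u in a..b, g u * w u)
        - w c * ((b - a) * g c - ∫ u in a..b, g u) := by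
    have e : ∀ u, (g c - g u) * (w u - w c)
        = (g c * w u - g u * w u) - (w c * g c - w c * g u) := fun u => by ring
    simp_rw [e]
    rw [integral_sub ((hint_w.const_mul _).sub hint_gw)
        (intervalIntegrable_const.sub (hint_g.const_mul _)),
      integral_sub (hint_w.const_mul _) hint_gw,
      integral_sub intervalIntegrable_const (hint_g.const_mul _),
      integral_const_mul, integral_const_mul, integral_const_mul, integral_const, smul_eq_mul]
    ring
  have h : 0 ≤ ∫ u in a..b, (g c - g u) * (w u - w c) := integral_nonneg hab hpt
  rw [hexpand] at h
  linarith [mul_nonneg hw₀ (sub_nonneg.2 hmean)]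

theorem mul_integral_rpow_sub_one_mul_deriv {f f' : ℝ → ℝ} {a b : ℝ} (q : ℝ)
    (hpos : ∀ u ∈ uIcc a b, 0 < f u) (hf : ∀ u ∈ uIcc a b, HasDerivAt f (f' u) u)
    (hf' : ContinuousOn f' (uIcc a b)) :
    q * ∫ u in a..b, f u ^ (q - 1) * f' u = f b ^ q - f a ^ q := by
  have hfc : ContinuousOn f (uIcc a b) := fun u hu => (hf u hu).continuousAt.continuousWithinAt
  rw [← integral_const_mul q]
  refine integral_eq_sub_of_hasDerivAt (f := fun u => f u ^ q) (fun u hu => ?_) ?_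
  · exact ((hf u hu).rpow_const (Or.inl (hpos u hu).ne')).congr_deriv (by ring)
  · exact (continuousOn_const.mul
      ((hfc.rpow_const fun u hu => Or.inl (hpos u hu).ne').mul hf')).intervalIntegrable

/-- Both sides are `0` when `f a ^ p = f b ^ p`, since `x / 0 = 0`. -/
theorem alzer_eq_integral_div {f f' : ℝ → ℝ} {p a b : ℝ} (hp₀ : p ≠ 0) (hp₁ : p ≠ -1)
    (hpos : ∀ u ∈ uIcc a b, 0 < f u) (hf : ∀ u ∈ uIcc a b, HasDerivAt f (f' u) u)
    (hf' : ContinuousOn f' (uIcc a b)) :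
    alzer p (f a) (f b) =
      (∫ u in a..b, f u * (f u ^ (p - 1) * f' u)) / ∫ u in a..b, f u ^ (p - 1) * f' u := by
  have hw := mul_integral_rpow_sub_one_mul_deriv p hpos hf hf'
  have hfw : (p + 1) * ∫ u in a..b, f u * (f u ^ (p - 1) * f' u)
      = f b ^ (p + 1) - f a ^ (p + 1) := by
    rw [← mul_integral_rpow_sub_one_mul_deriv (p + 1) hpos hf hf', add_sub_cancel_right]
    congr 1
    refine integral_congr fun u hu => ?_
    have hu : f u ≠ 0 := (hpos u hu).ne'
    simp only [Real.rpow_sub_one hu]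
    field_simp
  have hp₁' : p + 1 ≠ 0 := fun h => hp₁ (eq_neg_of_add_eq_zero_left h)
  rw [alzer_comm, alzer, ← hw, ← hfw, mul_div_mul_comm, ← mul_assoc,
    div_mul_div_cancel₀ hp₁', div_self hp₀, one_mul]

theorem alzer_le_apply_midpoint {f f' : ℝ → ℝ} {p a b : ℝ} (hp₀ : p ≠ 0) (hp₁ : p ≠ -1)
    (hab : a ≤ b) (hpos : ∀ u ∈ Icc a b, 0 < f u) (hf : ∀ u ∈ Icc a b, HasDerivAt f (f' u) u)
    (hf'c : ContinuousOn f' (Icc a b)) (hf'₀ : ∀ u ∈ Icc a b, 0 ≤ f' u)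
    (hconc : ConcaveOn ℝ (Icc a b) f)
    (hdec : AntitoneOn (fun u => f u ^ (p - 1) * f' u) (Icc a b)) :
    alzer p (f a) (f b) ≤ f ((a + b) / 2) := by
  have hfc : ContinuousOn f (Icc a b) := fun u hu => (hf u hu).continuousAt.continuousWithinAt
  have hwc : ContinuousOn (fun u => f u ^ (p - 1) * f' u) (Icc a b) :=
    (hfc.rpow_const fun u hu => Or.inl (hpos u hu).ne').mul hf'c
  have hw₀ : ∀ u ∈ Icc a b, 0 ≤ f u ^ (p - 1) * f' u := fun u hu =>
    mul_nonneg (Real.rpow_nonneg (hpos u hu).le _) (hf'₀ u hu)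
  have hmono : MonotoneOn f (Icc a b) :=
    monotoneOn_of_hasDerivWithinAt_nonneg (convex_Icc a b) hfc
      (fun u hu => (hf u (interior_subset hu)).hasDerivWithinAt)
      (fun u hu => hf'₀ u (interior_subset hu))
  have hmid : (a + b) / 2 ∈ Icc a b := ⟨by linarith, by linarith⟩
  have hmean : ∫ u in a..b, f u ≤ (b - a) * f ((a + b) / 2) :=
    hconc.integral_le_mul_apply_midpoint hab (hfc.intervalIntegrable_of_Icc hab)
  have hcheb := integral_mul_le_of_monotoneOn_of_antitoneOn hab hmid hmono hdec hfc hwc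
    (hw₀ _ hmid) hmean
  rw [← uIcc_of_le hab] at hpos hf hf'c
  rw [alzer_eq_integral_div hp₀ hp₁ hpos hf hf'c]
  exact div_le_of_le_mul₀ (integral_nonneg hab hw₀) (hpos _ (uIcc_of_le hab ▸ hmid)).le hcheb

/-- Let `p > 1`. If `f : (0,∞) → (0,∞)` is continuously differentiable,
strictly increasing and concave, and `x ↦ f(x)^(p-1) * f'(x)` is decreasing,
then `J_p(f(x), f(y)) ≤ f(A(x,y))` for distinct `x, y > 0`,
where `A(x,y) = (x+y)/2`. -/
theorem alzer_le_arith_of_concave_increasing (p : ℝ) (hp : 1 < p)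
    (f : ℝ → ℝ)
    (hpos : ∀ x ∈ Ioi (0 : ℝ), 0 < f x)
    (hder : ContDiffOn ℝ 1 f (Ioi 0))
    (hmono : StrictMonoOn f (Ioi 0))
    (hconc : ConcaveOn ℝ (Ioi 0) f)
    (hdec : AntitoneOn (fun x => f x ^ (p - 1) * deriv f x) (Ioi 0)) :
    ∀ x ∈ Ioi (0 : ℝ), ∀ y ∈ Ioi (0 : ℝ), x ≠ y →
      alzer p (f x) (f y) ≤ f ((x + y) / 2) := by
  rintro x hx y hy -
  wlog hxy : x ≤ y generalizing x y
  · rw [alzer_comm, add_comm]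
    exact this y hy x hx (le_of_not_ge hxy)
  have hsub : Icc x y ⊆ Ioi 0 := fun u hu => lt_of_lt_of_le hx hu.1
  have hf : ∀ u ∈ Ioi (0 : ℝ), HasDerivAt f (deriv f u) u := fun u hu =>
    ((hder.differentiableOn one_ne_zero).differentiableAt (isOpen_Ioi.mem_nhds hu)).hasDerivAt
  have hf'₀ : ∀ u ∈ Ioi (0 : ℝ), 0 ≤ deriv f u := fun u hu =>
    (hf u hu).nonneg_of_monotoneOn hmono.monotoneOn (isOpen_Ioi.mem_nhds hu)
  exact alzer_le_apply_midpoint (by linarith) (by linarith) hxy (fun u hu => hpos u (hsub hu))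
    (fun u hu => hf u (hsub hu)) ((hder.continuousOn_deriv_of_isOpen isOpen_Ioi le_rfl).mono hsub)
    (fun u hu => hf'₀ u (hsub hu)) (hconc.subset hsub (convex_Icc x y)) (hdec.mono hsub)
end

section
/- Let p ∈ ℝ ∖ {0, −1}, and let f : (0,∞) → (0,∞) be continuously differentiable and strictly increasing, such that the function x ↦ f(x)^{p−1} · f'(x) is increasing. Then for all x, y ∈ (0,∞) with y < x, J_p(f(x), f(y)) ≥ (1/(x−y)) · ∫_y^x f(u) du. -/
open Set MeasureTheory intervalIntegral

/-!
Substituting `t = f u` in `J_p(a, b) = ∫_b^a t^p dt / ∫_b^a t^(p-1) dt` writes `J_p(f x, f y)` as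
the mean of `f` over `[y, x]` with respect to the weight `w = f^(p-1) f' > 0`. Both `f` and `w`
are increasing, so by Chebyshev's integral inequality `(∫ f) (∫ w) ≤ (x - y) ∫ f w`: the
`w`-weighted mean of `f` dominates its plain mean.
-/

section Chebyshev

variable {g h : ℝ → ℝ} {a b : ℝ}

theorem hasDerivAt_integral_of_continuousOn_Icc {t : ℝ} (hg : ContinuousOn g (Icc a b))
    (ht : t ∈ Ioo a b) : HasDerivAt (fun s => ∫ u in a..s, g u) (g t) t :=
  integral_hasDerivAt_right
    ((hg.mono (Icc_subset_Icc_right ht.2.le)).intervalIntegrable_of_Icc ht.1.le)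
    ((hg.mono Ioo_subset_Icc_self).stronglyMeasurableAtFilter isOpen_Ioo t ht)
    (hg.continuousAt (Icc_mem_nhds ht.1 ht.2))

theorem continuousOn_primitive_of_continuousOn_Icc (hab : a ≤ b)
    (hg : ContinuousOn g (Icc a b)) : ContinuousOn (fun s => ∫ u in a..s, g u) (Icc a b) := by
  rw [← uIcc_of_le hab] at hg ⊢
  exact continuousOn_primitive_interval hg.integrableOn_uIcc

theorem integral_sub_mul_sub_eq (hab : a ≤ b) (hg : ContinuousOn g (Icc a b))
    (hh : ContinuousOn h (Icc a b)) :
    ∫ u in a..b, (g b - g u) * (h b - h u) =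
      (b - a) * (g b * h b) - g b * (∫ u in a..b, h u) - h b * (∫ u in a..b, g u)
        + ∫ u in a..b, g u * h u := by
  have ig : IntervalIntegrable g volume a b := hg.intervalIntegrable_of_Icc hab
  have ih : IntervalIntegrable h volume a b := hh.intervalIntegrable_of_Icc hab
  have igh : IntervalIntegrable (fun u => g u * h u) volume a b :=
    (hg.mul hh).intervalIntegrable_of_Icc hab
  have ic : IntervalIntegrable (fun _ => g b * h b) volume a b := intervalIntegrable_const
  have expand : (fun u => (g b - g u) * (h b - h u))
      = fun u => g b * h b - g b * h u - h b * g u + g u * h u := by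
    funext u; ring
  rw [expand, integral_add ((ic.sub (ih.const_mul _)).sub (ig.const_mul _)) igh,
    integral_sub (ic.sub (ih.const_mul _)) (ig.const_mul _), integral_sub ic (ih.const_mul _),
    intervalIntegral.integral_const, intervalIntegral.integral_const_mul,
    intervalIntegral.integral_const_mul, smul_eq_mul]

noncomputable def chebyshevDefect (g h : ℝ → ℝ) (a s : ℝ) : ℝ :=
  (s - a) * (∫ u in a..s, g u * h u) - (∫ u in a..s, g u) * ∫ u in a..s, h u

theorem hasDerivAt_chebyshevDefect {t : ℝ} (hg : ContinuousOn g (Icc a b))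
    (hh : ContinuousOn h (Icc a b)) (ht : t ∈ Ioo a b) :
    HasDerivAt (chebyshevDefect g h a) (∫ u in a..t, (g t - g u) * (h t - h u)) t := by
  have hG := hasDerivAt_integral_of_continuousOn_Icc hg ht
  have hH := hasDerivAt_integral_of_continuousOn_Icc hh ht
  have hGH := hasDerivAt_integral_of_continuousOn_Icc (hg.mul hh) ht
  have hsub : Icc a t ⊆ Icc a b := Icc_subset_Icc_right ht.2.le
  refine ((((hasDerivAt_id t).sub_const a).mul hGH).sub (hG.mul hH)).congr_deriv ?_
  rw [integral_sub_mul_sub_eq ht.1.le (hg.mono hsub) (hh.mono hsub)]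
  simp only [id, Pi.mul_apply]
  ring

theorem monotoneOn_chebyshevDefect (hab : a ≤ b)
    (hgc : ContinuousOn g (Icc a b)) (hhc : ContinuousOn h (Icc a b))
    (hg : MonotoneOn g (Icc a b)) (hh : MonotoneOn h (Icc a b)) :
    MonotoneOn (chebyshevDefect g h a) (Icc a b) := by
  refine monotoneOn_of_hasDerivWithinAt_nonneg (convex_Icc a b)
    (f' := fun t => ∫ u in a..t, (g t - g u) * (h t - h u)) ?_ ?_ ?_
  · exact ((continuousOn_id.sub continuousOn_const).mul
      (continuousOn_primitive_of_continuousOn_Icc hab (hgc.mul hhc))).sub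
      ((continuousOn_primitive_of_continuousOn_Icc hab hgc).mul
        (continuousOn_primitive_of_continuousOn_Icc hab hhc))
  · rw [interior_Icc]
    exact fun t ht => (hasDerivAt_chebyshevDefect hgc hhc ht).hasDerivWithinAt
  · rw [interior_Icc]
    intro t ht
    have ht' : t ∈ Icc a b := Ioo_subset_Icc_self ht
    refine integral_nonneg ht.1.le fun u hu => mul_nonneg ?_ ?_ <;> rw [sub_nonneg]
    · exact hg ⟨hu.1, hu.2.trans ht'.2⟩ ht' hu.2
    · exact hh ⟨hu.1, hu.2.trans ht'.2⟩ ht' hu.2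

theorem integral_mul_integral_le_of_monotoneOn (hab : a ≤ b)
    (hgc : ContinuousOn g (Icc a b)) (hhc : ContinuousOn h (Icc a b))
    (hg : MonotoneOn g (Icc a b)) (hh : MonotoneOn h (Icc a b)) :
    (∫ u in a..b, g u) * (∫ u in a..b, h u) ≤ (b - a) * ∫ u in a..b, g u * h u := by
  have := monotoneOn_chebyshevDefect hab hgc hhc hg hh (left_mem_Icc.2 hab)
    (right_mem_Icc.2 hab) hab
  simp only [chebyshevDefect, sub_self, integral_same, mul_zero] at this
  linarith

end Chebyshev

theorem integral_rpow_pos {a b : ℝ} (r : ℝ) (ha : 0 < a) (hab : a < b) :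
    0 < ∫ t in a..b, t ^ r :=
  intervalIntegral_pos_of_pos_on
    (intervalIntegral.intervalIntegrable_rpow (Or.inr (notMem_uIcc_of_lt ha (ha.trans hab))))
    (fun _ ht => Real.rpow_pos_of_pos (ha.trans ht.1) r) hab

theorem alzer_eq_integral_rpow_div {p a b : ℝ} (hp0 : p ≠ 0) (hpm : p ≠ -1) (ha : 0 < a)
    (hb : 0 < b) :
    alzer p a b = (∫ t in b..a, t ^ p) / ∫ t in b..a, t ^ (p - 1) := by
  have h0 : (0 : ℝ) ∉ uIcc b a := notMem_uIcc_of_lt hb ha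
  have hp1 : p + 1 ≠ 0 := fun h => hpm (by linarith)
  rw [integral_rpow (Or.inr ⟨hpm, h0⟩),
    integral_rpow (Or.inr ⟨fun h => hp0 (by linarith), h0⟩), sub_add_cancel, alzer]
  field_simp

theorem integral_rpow_comp_mul_deriv {f f' : ℝ → ℝ} {a b : ℝ} (r : ℝ)
    (hf : ∀ x ∈ uIcc a b, HasDerivAt f (f' x) x) (hf' : ContinuousOn f' (uIcc a b))
    (hpos : ∀ x ∈ uIcc a b, 0 < f x) :
    ∫ x in a..b, f x ^ r * f' x = ∫ t in f a..f b, t ^ r := by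
  refine integral_comp_mul_deriv' (g := fun t => t ^ r) hf hf' ?_
  rintro _ ⟨x, hx, rfl⟩
  exact (Real.continuousAt_rpow_const _ _ (Or.inl (hpos x hx).ne')).continuousWithinAt

theorem alzer_comp_eq_integral_mul_div {p : ℝ} (hp0 : p ≠ 0) (hpm : p ≠ -1) {f f' : ℝ → ℝ}
    {x y : ℝ} (hf : ∀ u ∈ uIcc y x, HasDerivAt f (f' u) u) (hf' : ContinuousOn f' (uIcc y x))
    (hpos : ∀ u ∈ uIcc y x, 0 < f u) :
    alzer p (f x) (f y) = (∫ u in y..x, f u * (f u ^ (p - 1) * f' u)) /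
      ∫ u in y..x, f u ^ (p - 1) * f' u := by
  rw [alzer_eq_integral_rpow_div hp0 hpm (hpos x right_mem_uIcc) (hpos y left_mem_uIcc),
    ← integral_rpow_comp_mul_deriv p hf hf' hpos,
    ← integral_rpow_comp_mul_deriv (p - 1) hf hf' hpos]
  congr 1
  refine integral_congr fun u hu => ?_
  simp only [Real.rpow_sub_one (hpos u hu).ne']
  field_simp [(hpos u hu).ne']

/-- Let `p ∉ {0,-1}`. If `f : (0,∞) → (0,∞)` is continuously differentiable,
strictly increasing, and `x ↦ f(x)^(p-1) * f'(x)` is increasing, then for all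
`0 < y < x`, `J_p(f(x), f(y)) ≥ (1/(x-y)) ∫_y^x f(u) du`. -/
theorem alzer_ge_integral_mean (p : ℝ) (hp0 : p ≠ 0) (hpm : p ≠ -1)
    (f : ℝ → ℝ)
    (hpos : ∀ x ∈ Ioi (0 : ℝ), 0 < f x)
    (hder : ContDiffOn ℝ 1 f (Ioi 0))
    (hmono : StrictMonoOn f (Ioi 0))
    (hinc : MonotoneOn (fun x => f x ^ (p - 1) * deriv f x) (Ioi 0)) :
    ∀ x y : ℝ, 0 < y → y < x →
      alzer p (f x) (f y) ≥ (1 / (x - y)) * ∫ u in y..x, f u := by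
  intro x y hy hyx
  have hIcc : Icc y x ⊆ Ioi 0 := fun u hu => hy.trans_le hu.1
  have huIcc : uIcc y x = Icc y x := uIcc_of_le hyx.le
  have hfc : ContinuousOn f (Icc y x) := hder.continuousOn.mono hIcc
  have hf'c : ContinuousOn (deriv f) (Icc y x) :=
    (hder.continuousOn_deriv_of_isOpen isOpen_Ioi le_rfl).mono hIcc
  have hf' : ∀ u ∈ uIcc y x, HasDerivAt f (deriv f u) u := fun u hu =>
    ((hder.differentiableOn one_ne_zero).differentiableAt
      (Ioi_mem_nhds (hIcc (huIcc ▸ hu)))).hasDerivAt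
  have hfpos : ∀ u ∈ uIcc y x, 0 < f u := fun u hu => hpos u (hIcc (huIcc ▸ hu))
  have weight_pos : 0 < ∫ u in y..x, f u ^ (p - 1) * deriv f u := by
    rw [integral_rpow_comp_mul_deriv (p - 1) hf' (huIcc ▸ hf'c) hfpos]
    exact integral_rpow_pos (p - 1) (hpos y hy) (hmono hy (hy.trans hyx) hyx)
  have weight_cont : ContinuousOn (fun u => f u ^ (p - 1) * deriv f u) (Icc y x) :=
    (hfc.rpow_const fun u hu => Or.inl (hpos u (hIcc hu)).ne').mul hf'c
  have cheb := integral_mul_integral_le_of_monotoneOn hyx.le hfc weight_cont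
    (hmono.monotoneOn.mono hIcc) (hinc.mono hIcc)
  rw [ge_iff_le, alzer_comp_eq_integral_mul_div hp0 hpm hf' (huIcc ▸ hf'c) hfpos,
    one_div_mul_eq_div, div_le_div_iff₀ (sub_pos.2 hyx) weight_pos]
  linarith
end
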